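/- arXiv:1910.02418 — 3 statements merged into one kernel-verified Lean document; each statement's English description precedes it below -/
import Mathlib

section
/- For every integer n ≥ 51, f(n)² − f(n−2)·f(n+2) > 0. -/
/-!
Subsets of the multiples of some `d ≥ 2` are not relatively prime, and every nonempty subset
that is not relatively prime consists of multiples of its gcd `d ≥ 2`. So `2 ^ m - f m` lies
between `2 ^ ⌊m/2⌋` (the sets of even numbers) and `2 ^ ⌊m/2⌋ + 2 ^ (⌊m/2⌋ - 3)` once `m ≥ 51`,
the divisors `d ≥ 3` contributing little. With `N = 2 ^ n` and `y = 2 ^ (⌊n/2⌋ - 3)` this gives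
`f n ≥ N - 9y`, `4 f (n - 2) ≤ N - 16y` and `f (n + 2) ≤ 4N - 16y`, whence
`4 f(n)² - 4 f(n - 2) f(n + 2) ≥ 8Ny + 68y² > 0`.
-/

open Finset

/-- `f n` is the number of relatively prime subsets of `{1, 2, ..., n}`,
i.e. subsets `A` with `gcd A = 1` (such subsets are automatically nonempty). -/
def f (n : ℕ) : ℕ :=
  ((Finset.Icc 1 n).powerset.filter (fun A => A.gcd id = 1)).card

lemma card_filter_dvd_Icc_one (m d : ℕ) : #{x ∈ Icc 1 m | d ∣ x} = m / d := by
  rw [← Nat.Ioc_filter_dvd_card_eq_div, ← Icc_add_one_left_eq_Ioc, zero_add]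

lemma gcd_ne_one_of_forall_dvd {A : Finset ℕ} {d : ℕ} (hd : d ≠ 1) (hA : ∀ a ∈ A, d ∣ a) :
    A.gcd id ≠ 1 := fun h => hd (Nat.eq_one_of_dvd_one (h ▸ Finset.dvd_gcd hA))

lemma f_add_two_pow_div_le (m : ℕ) {d : ℕ} (hd : 2 ≤ d) : f m + 2 ^ (m / d) ≤ 2 ^ m := by
  have hdisj : Disjoint {A ∈ (Icc 1 m).powerset | A.gcd id = 1}
      {x ∈ Icc 1 m | d ∣ x}.powerset := by
    refine disjoint_left.mpr fun A hA hA' => ?_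
    refine gcd_ne_one_of_forall_dvd (by omega : d ≠ 1) (fun a ha => ?_) (mem_filter.mp hA).2
    exact (mem_filter.mp (mem_powerset.mp hA' ha)).2
  have hsub : {A ∈ (Icc 1 m).powerset | A.gcd id = 1} ∪ {x ∈ Icc 1 m | d ∣ x}.powerset
      ⊆ (Icc 1 m).powerset :=
    union_subset (filter_subset _ _) (powerset_mono.mpr (filter_subset _ _))
  have := card_le_card hsub
  rwa [card_union_of_disjoint hdisj, card_powerset, card_filter_dvd_Icc_one, card_powerset,
    Nat.card_Icc, Nat.add_sub_cancel] at this

lemma two_pow_le_f_add_sum (m : ℕ) :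
    2 ^ m ≤ f m + (1 + ∑ d ∈ Icc 2 m, 2 ^ (m / d)) := by
  have hcover : {A ∈ (Icc 1 m).powerset | ¬A.gcd id = 1}
      ⊆ insert ∅ ((Icc 2 m).biUnion fun d => {x ∈ Icc 1 m | d ∣ x}.powerset) := by
    intro A hA
    obtain ⟨hAm, hgcd⟩ := mem_filter.mp hA
    rw [mem_powerset] at hAm
    obtain rfl | ⟨a, ha⟩ := A.eq_empty_or_nonempty
    · exact mem_insert_self _ _
    refine mem_insert_of_mem (mem_biUnion.mpr ⟨A.gcd id, ?_, ?_⟩)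
    · have ha' := mem_Icc.mp (hAm ha)
      have hdvd : A.gcd id ∣ a := gcd_dvd ha
      have hle : A.gcd id ≤ a := Nat.le_of_dvd (by omega) hdvd
      have hpos : 0 < A.gcd id := Nat.pos_of_dvd_of_pos hdvd (by omega)
      exact mem_Icc.mpr ⟨by omega, by omega⟩
    · exact mem_powerset.mpr fun b hb => mem_filter.mpr ⟨hAm hb, gcd_dvd hb⟩
  have hsum : #((Icc 2 m).biUnion fun d => {x ∈ Icc 1 m | d ∣ x}.powerset)
      ≤ ∑ d ∈ Icc 2 m, 2 ^ (m / d) :=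
    card_biUnion_le.trans_eq (sum_congr rfl fun d _ => by
      rw [card_powerset, card_filter_dvd_Icc_one])
  have hsplit :=
    card_filter_add_card_filter_not (s := (Icc 1 m).powerset) (fun A => A.gcd id = 1)
  rw [card_powerset, Nat.card_Icc, Nat.add_sub_cancel] at hsplit
  have := (card_le_card hcover).trans (card_insert_le _ _)
  unfold f
  omega

lemma four_mul_add_three_le_two_pow_sub_four (m : ℕ) (hm : 12 ≤ m) :
    4 * m + 3 ≤ 2 ^ (m - 4) := by
  induction m, hm using Nat.le_induction with
  | base => norm_num
  | succ m hm ih =>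
    rw [show m + 1 - 4 = m - 4 + 1 by omega, pow_succ]
    have : 2 ^ 8 ≤ 2 ^ (m - 4) := Nat.pow_le_pow_right two_pos (by omega)
    omega

lemma one_add_sum_Icc_three_le (m : ℕ) (hm : 51 ≤ m) :
    1 + ∑ d ∈ Icc 3 m, 2 ^ (m / d) ≤ 2 ^ (m / 2 - 3) := by
  have hthree : 1 + 2 ^ (m / 3) ≤ 2 ^ (m / 2 - 4) :=
    calc 1 + 2 ^ (m / 3) ≤ 2 ^ (m / 3) + 2 ^ (m / 3) := by
          have := Nat.one_le_two_pow (n := m / 3); omega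
      _ = 2 ^ (m / 3 + 1) := by rw [pow_succ]; ring
      _ ≤ 2 ^ (m / 2 - 4) := Nat.pow_le_pow_right two_pos (by omega)
  have hfour : ∑ d ∈ Icc 4 m, 2 ^ (m / d) ≤ 2 ^ (m / 2 - 4) :=
    calc ∑ d ∈ Icc 4 m, 2 ^ (m / d) ≤ #(Icc 4 m) • 2 ^ (m / 4) :=
          sum_le_card_nsmul _ _ _ fun d hd =>
            Nat.pow_le_pow_right two_pos (Nat.div_le_div_left (mem_Icc.mp hd).1 (by norm_num))
      _ ≤ 2 ^ (m / 4 - 4) * 2 ^ (m / 4) := by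
          rw [Nat.card_Icc, smul_eq_mul]
          have := four_mul_add_three_le_two_pow_sub_four (m / 4) (by omega)
          exact Nat.mul_le_mul_right _ (by omega)
      _ ≤ 2 ^ (m / 2 - 4) := by
          rw [← pow_add]; exact Nat.pow_le_pow_right two_pos (by omega)
  have hsplit : Icc 3 m = insert 3 (Icc 4 m) := by
    ext x; simp only [mem_Icc, mem_insert]; omega
  rw [hsplit, sum_insert (by simp), show m / 2 - 3 = m / 2 - 4 + 1 by omega, pow_succ]
  omega

lemma two_pow_le_f_add (m : ℕ) (hm : 51 ≤ m) : 2 ^ m ≤ f m + 9 * 2 ^ (m / 2 - 3) := by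
  have hsplit : Icc 2 m = insert 2 (Icc 3 m) := by
    ext x; simp only [mem_Icc, mem_insert]; omega
  have h := two_pow_le_f_add_sum m
  rw [hsplit, sum_insert (by simp), show m / 2 = m / 2 - 3 + 3 by omega, pow_add] at h
  have := one_add_sum_Icc_three_le m hm
  omega

lemma mul_lt_sq_of_bounds {R : Type*} [CommRing R] [LinearOrder R] [IsStrictOrderedRing R]
    {F G H N y : R} (hy : 0 < y) (hG : 0 ≤ G) (hH : 0 ≤ H) (hF : N ≤ F + 9 * y)
    (hGN : 4 * G + 16 * y ≤ N) (hHN : H + 16 * y ≤ 4 * N) : G * H < F ^ 2 := by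
  nlinarith [mul_le_mul_of_nonneg_right hGN hH,
    mul_le_mul_of_nonneg_left hHN (by linarith : 0 ≤ N - 16 * y),
    mul_self_le_mul_self (by linarith : 0 ≤ N - 9 * y) (by linarith : N - 9 * y ≤ F)]

theorem stmt_4 (n : ℕ) (hn : 51 ≤ n) :
    (f n : ℤ) ^ 2 - f (n - 2) * f (n + 2) > 0 := by
  set y := 2 ^ (n / 2 - 3)
  have hN : 2 ^ n = 2 ^ (n - 2) * 4 := by
    rw [show 4 = 2 ^ 2 by norm_num, ← pow_add, Nat.sub_add_cancel (by omega)]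
  have hprev := f_add_two_pow_div_le (n - 2) le_rfl
  rw [show (n - 2) / 2 = n / 2 - 3 + 2 by omega, pow_add] at hprev
  have hnext := f_add_two_pow_div_le (n + 2) le_rfl
  rw [show (n + 2) / 2 = n / 2 - 3 + 4 by omega, pow_add, pow_add] at hnext
  norm_num at hprev hnext
  have hF : 2 ^ n ≤ f n + 9 * y := two_pow_le_f_add n hn
  have hG : 4 * f (n - 2) + 16 * y ≤ 2 ^ n := by omega
  have hH : f (n + 2) + 16 * y ≤ 4 * 2 ^ n := by omega
  refine sub_pos.mpr (mul_lt_sq_of_bounds (N := ((2 ^ n : ℕ) : ℤ)) (y := (y : ℤ))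
    (by positivity) (by positivity) (by positivity) ?_ ?_ ?_) <;> exact_mod_cast ‹_›
end

section
/- For every integer n ≥ 51, f(n)² − f(n−3)·f(n+3) > 0. -/
open Finset

def nonRelPrime (n : ℕ) : Finset (Finset ℕ) :=
  (Icc 1 n).powerset.filter fun A => A.gcd id ≠ 1

lemma f_eq_two_pow_sub_card_nonRelPrime (n : ℕ) : (f n : ℤ) = 2 ^ n - #(nonRelPrime n) := by
  have h : f n + #(nonRelPrime n) = 2 ^ n := by
    rw [f, nonRelPrime, card_filter_add_card_filter_not, card_powerset, Nat.card_Icc,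
      Nat.add_sub_cancel]
  rw [eq_sub_iff_add_eq]
  exact_mod_cast h

lemma card_filter_dvd_Icc (d n : ℕ) : #{x ∈ Icc 1 n | d ∣ x} = n / d := by
  rw [show Icc 1 n = Ioc 0 n from Icc_add_one_left_eq_Ioc 0 n]
  exact Nat.Ioc_filter_dvd_card_eq_div n d

lemma powerset_filter_dvd_subset_nonRelPrime {d : ℕ} (hd : 2 ≤ d) (n : ℕ) :
    {x ∈ Icc 1 n | d ∣ x}.powerset ⊆ nonRelPrime n := by
  intro A hA
  have hA' : ∀ x ∈ A, x ∈ Icc 1 n ∧ d ∣ x := fun x hx => mem_filter.1 (mem_powerset.1 hA hx)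
  refine mem_filter.2 ⟨mem_powerset.2 fun x hx => (hA' x hx).1, fun h => ?_⟩
  have : d ∣ A.gcd id := dvd_gcd fun x hx => (hA' x hx).2
  rw [h, Nat.dvd_one] at this
  omega

lemma nonRelPrime_subset_biUnion {n : ℕ} (hn : 2 ≤ n) :
    nonRelPrime n ⊆ (Icc 2 n).biUnion fun d => {x ∈ Icc 1 n | d ∣ x}.powerset := by
  intro A hA
  obtain ⟨hA, hgcd⟩ := mem_filter.1 hA
  rw [mem_powerset] at hA
  rw [mem_biUnion]
  rcases A.eq_empty_or_nonempty with rfl | ⟨a, ha⟩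
  · exact ⟨2, mem_Icc.2 ⟨le_rfl, hn⟩, empty_mem_powerset _⟩
  have ha₁ := mem_Icc.1 (hA ha)
  have hpos : 0 < A.gcd id := Nat.pos_of_dvd_of_pos (gcd_dvd ha) ha₁.1
  refine ⟨A.gcd id, mem_Icc.2 ⟨by omega, (Nat.le_of_dvd ha₁.1 (gcd_dvd ha)).trans ha₁.2⟩, ?_⟩
  exact mem_powerset.2 fun x hx => mem_filter.2 ⟨hA hx, gcd_dvd hx⟩

lemma two_pow_half_le_card_nonRelPrime (n : ℕ) : 2 ^ (n / 2) ≤ #(nonRelPrime n) := by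
  simpa [card_filter_dvd_Icc] using card_le_card (powerset_filter_dvd_subset_nonRelPrime le_rfl n)

lemma card_nonRelPrime_le_sum {n : ℕ} (hn : 2 ≤ n) :
    #(nonRelPrime n) ≤ ∑ d ∈ Icc 2 n, 2 ^ (n / d) := by
  calc #(nonRelPrime n) ≤ _ := card_le_card (nonRelPrime_subset_biUnion hn)
    _ ≤ _ := card_biUnion_le
    _ = _ := by simp only [card_powerset, card_filter_dvd_Icc]

lemma sum_two_pow_div_le {n : ℕ} (hn : 4 ≤ n) :
    ∑ d ∈ Icc 2 n, 2 ^ (n / d) ≤ 2 ^ (n / 2) + 2 ^ (n / 3) + n * 2 ^ (n / 4) := by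
  have htail : ∑ d ∈ Icc 4 n, 2 ^ (n / d) ≤ n * 2 ^ (n / 4) := by
    calc ∑ d ∈ Icc 4 n, 2 ^ (n / d) ≤ ∑ _d ∈ Icc 4 n, 2 ^ (n / 4) :=
          sum_le_sum fun d hd => Nat.pow_le_pow_right two_pos
            (Nat.div_le_div_left (mem_Icc.1 hd).1 (by norm_num))
      _ ≤ n * 2 ^ (n / 4) := by
          rw [sum_const, smul_eq_mul, Nat.card_Icc]
          exact Nat.mul_le_mul_right _ (by omega)
  have hsplit : Icc 2 n = insert 2 (insert 3 (Icc 4 n)) := by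
    ext x; simp only [mem_insert, mem_Icc]; omega
  rw [hsplit, sum_insert (by simp), sum_insert (by simp)]
  omega

theorem mul_lt_sq_of_le_sub {R : Type*} [CommRing R] [LinearOrder R] [IsStrictOrderedRing R]
    {N U a b c B C p q : R} (hN : 0 ≤ N) (hBC : B * C = N ^ 2) (ha : N - U ≤ a)
    (hb₀ : 0 ≤ b) (hb : b ≤ B - p) (hc₀ : 0 ≤ c) (hc : c ≤ C - q)
    (hpq : 2 * N * U + p * q < B * q + C * p) : b * c < a ^ 2 := by
  have hsq : N ^ 2 - 2 * N * U ≤ a ^ 2 := by nlinarith [sq_nonneg (a - N)]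
  calc b * c ≤ (B - p) * (C - q) := mul_le_mul hb hc hc₀ (hb₀.trans hb)
    _ < N ^ 2 - 2 * N * U := by linear_combination hpq + hBC
    _ ≤ a ^ 2 := hsq

lemma four_mul_add_lt_two_pow {k : ℕ} (hk : 6 ≤ k) : 4 * k + 27 < 2 ^ k := by
  induction k, hk using Nat.le_induction with
  | base => norm_num
  | succ k hk ih =>
    have : 2 ^ 6 ≤ 2 ^ k := Nat.pow_le_pow_right two_pos hk
    rw [pow_succ]
    omega

lemma lt_two_pow_div_four_sub {n : ℕ} (hn : 51 ≤ n) : n < 2 ^ (n / 4 - 6) := by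
  have := four_mul_add_lt_two_pow (k := n / 4 - 6) (by omega)
  omega

lemma lower_order_terms_lt_two_pow_half {n : ℕ} (hn : 51 ≤ n) :
    2 * (2 ^ (n / 3) + n * 2 ^ (n / 4)) + 1 < 2 ^ (n / 2 - 2) := by
  have h₃ : 2 ^ (n / 3) ≤ 2 ^ (n / 2 - 6) := Nat.pow_le_pow_right two_pos (by omega)
  have h₄ : n * 2 ^ (n / 4) ≤ 2 ^ (n / 2 - 6) :=
    calc n * 2 ^ (n / 4) ≤ 2 ^ (n / 4 - 6) * 2 ^ (n / 4) :=
          Nat.mul_le_mul_right _ (lt_two_pow_div_four_sub hn).le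
      _ = 2 ^ (n / 4 - 6 + n / 4) := (pow_add _ _ _).symm
      _ ≤ 2 ^ (n / 2 - 6) := Nat.pow_le_pow_right two_pos (by omega)
  have h₂ : 2 ^ (n / 2 - 2) = 2 ^ 4 * 2 ^ (n / 2 - 6) := by rw [← pow_add]; congr 1; omega
  have : 1 ≤ 2 ^ (n / 2 - 6) := Nat.one_le_two_pow
  omega

lemma two_pow_key_estimate {n : ℕ} (hn : 51 ≤ n) :
    2 * 2 ^ n * (2 ^ (n / 2) + 2 ^ (n / 3) + n * 2 ^ (n / 4))
        + 2 ^ ((n - 3) / 2) * 2 ^ ((n + 3) / 2)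
      < 2 ^ (n - 3) * 2 ^ ((n + 3) / 2) + 2 ^ (n + 3) * 2 ^ ((n - 3) / 2) := by
  have hC : 2 * 2 ^ n * 2 ^ (n / 2) ≤ 2 ^ (n + 3) * 2 ^ ((n - 3) / 2) := by
    rw [← pow_succ', ← pow_add, ← pow_add]; exact Nat.pow_le_pow_right two_pos (by omega)
  have hB : 2 ^ n * 2 ^ (n / 2 - 2) ≤ 2 ^ (n - 3) * 2 ^ ((n + 3) / 2) := by
    rw [← pow_add, ← pow_add]; exact Nat.pow_le_pow_right two_pos (by omega)
  have hpq : 2 ^ ((n - 3) / 2) * 2 ^ ((n + 3) / 2) ≤ 2 ^ n := by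
    rw [← pow_add]; exact Nat.pow_le_pow_right two_pos (by omega)
  have hR := Nat.mul_lt_mul_of_pos_left (lower_order_terms_lt_two_pow_half hn)
    (Nat.two_pow_pos n)
  nlinarith

theorem stmt_5 (n : ℕ) (hn : 51 ≤ n) :
    (f n : ℤ) ^ 2 - f (n - 3) * f (n + 3) > 0 := by
  have hupper : (#(nonRelPrime n) : ℤ) ≤ 2 ^ (n / 2) + 2 ^ (n / 3) + n * 2 ^ (n / 4) := by
    exact_mod_cast (card_nonRelPrime_le_sum (by omega)).trans (sum_two_pow_div_le (by omega))
  have hlower (m : ℕ) : (2 : ℤ) ^ (m / 2) ≤ #(nonRelPrime m) := by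
    exact_mod_cast two_pow_half_le_card_nonRelPrime m
  have hBC : (2 : ℤ) ^ (n - 3) * 2 ^ (n + 3) = (2 ^ n) ^ 2 := by
    rw [← pow_add, ← pow_mul]; congr 1; omega
  refine sub_pos.2 <| mul_lt_sq_of_le_sub (N := (2 : ℤ) ^ n)
    (U := 2 ^ (n / 2) + 2 ^ (n / 3) + n * 2 ^ (n / 4)) (p := 2 ^ ((n - 3) / 2))
    (q := 2 ^ ((n + 3) / 2)) (by positivity) hBC ?_ (Nat.cast_nonneg _) ?_ (Nat.cast_nonneg _) ?_
    (by exact_mod_cast two_pow_key_estimate hn)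
  · rw [f_eq_two_pow_sub_card_nonRelPrime]; linarith
  · rw [f_eq_two_pow_sub_card_nonRelPrime]; linarith [hlower (n - 3)]
  · rw [f_eq_two_pow_sub_card_nonRelPrime]; linarith [hlower (n + 3)]
end

section
/- For every integer n ≥ 36, f(n)² − f(n−7)·f(n+7) > 0. -/
open Finset

def nonCoprimeCount (n : ℕ) : ℕ :=
  ((Icc 1 n).powerset.filter (fun A => A.gcd id ≠ 1)).card

lemma f_add_nonCoprimeCount (n : ℕ) : f n + nonCoprimeCount n = 2 ^ n := by
  rw [f, nonCoprimeCount, card_filter_add_card_filter_not, card_powerset, Nat.card_Icc,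
    Nat.add_sub_cancel]

lemma mem_powerset_filter_dvd {n d : ℕ} {A : Finset ℕ} :
    A ∈ ((Icc 1 n).filter (d ∣ ·)).powerset ↔ A ⊆ Icc 1 n ∧ d ∣ A.gcd id := by
  simp only [mem_powerset, Finset.subset_iff, mem_filter, Finset.dvd_gcd_iff, id]
  exact ⟨fun h => ⟨fun a ha => (h ha).1, fun a ha => (h ha).2⟩, fun h a ha => ⟨h.1 ha, h.2 a ha⟩⟩

lemma card_powerset_filter_dvd (n d : ℕ) :
    ((Icc 1 n).filter (d ∣ ·)).powerset.card = 2 ^ (n / d) := by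
  rw [card_powerset, ← Nat.Ioc_filter_dvd_card_eq_div, ← Icc_add_one_left_eq_Ioc, zero_add]

lemma two_pow_half_le_nonCoprimeCount (n : ℕ) : 2 ^ (n / 2) ≤ nonCoprimeCount n := by
  rw [← card_powerset_filter_dvd n 2, nonCoprimeCount]
  refine card_le_card fun A hA => ?_
  obtain ⟨hsub, hdvd⟩ := mem_powerset_filter_dvd.mp hA
  refine mem_filter.mpr ⟨mem_powerset.mpr hsub, fun h => ?_⟩
  rw [h] at hdvd
  omega

lemma nonCoprimeCount_le (n : ℕ) : nonCoprimeCount n ≤ 2 ^ (n / 2) + n * 2 ^ (n / 3) := by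
  set D := fun d => ((Icc 1 n).filter (d ∣ ·)).powerset
  have hcover : (Icc 1 n).powerset.filter (fun A => A.gcd id ≠ 1) ⊆
      D 2 ∪ (Icc 3 n).biUnion D := by
    intro A hA
    obtain ⟨hsub, hne⟩ := mem_filter.mp hA
    rw [mem_powerset] at hsub
    by_cases heven : 2 ∣ A.gcd id
    · exact mem_union_left _ (mem_powerset_filter_dvd.mpr ⟨hsub, heven⟩)
    · obtain ⟨a, ha⟩ : A.Nonempty := nonempty_of_ne_empty fun h => heven (by simp [h])
      have ha' := mem_Icc.mp (hsub ha)
      have hle : A.gcd id ≤ a := Nat.le_of_dvd (by omega) (gcd_dvd ha)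
      refine mem_union_right _ (mem_biUnion.mpr ⟨A.gcd id, mem_Icc.mpr ⟨?_, by omega⟩,
        mem_powerset_filter_dvd.mpr ⟨hsub, dvd_rfl⟩⟩)
      omega
  have hsum : ∑ d ∈ Icc 3 n, (D d).card ≤ n * 2 ^ (n / 3) := by
    calc ∑ d ∈ Icc 3 n, (D d).card ≤ ∑ _d ∈ Icc 3 n, 2 ^ (n / 3) := by
          refine sum_le_sum fun d hd => ?_
          rw [card_powerset_filter_dvd]
          exact Nat.pow_le_pow_right two_pos (Nat.div_le_div_left (mem_Icc.mp hd).1 (by norm_num))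
      _ ≤ n * 2 ^ (n / 3) := by
          rw [sum_const, smul_eq_mul, Nat.card_Icc]
          exact Nat.mul_le_mul_right _ (by omega)
  calc nonCoprimeCount n ≤ (D 2 ∪ (Icc 3 n).biUnion D).card := card_le_card hcover
    _ ≤ (D 2).card + ((Icc 3 n).biUnion D).card := card_union_le _ _
    _ ≤ 2 ^ (n / 2) + n * 2 ^ (n / 3) := by
        rw [card_powerset_filter_dvd]
        exact Nat.add_le_add_left (card_biUnion_le.trans hsum) _

lemma six_mul_add_six_le_two_pow {q : ℕ} (hq : 4 ≤ q) : 6 * q + 6 ≤ 2 ^ (q + 1) := by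
  induction q, hq using Nat.le_induction with
  | base => norm_num
  | succ q _ ih => rw [pow_succ]; omega

lemma le_two_pow_div_six_add_one {n : ℕ} (hn : 24 ≤ n) : n ≤ 2 ^ (n / 6 + 1) :=
  (by omega : n ≤ 6 * (n / 6) + 6).trans (six_mul_add_six_le_two_pow (by omega))

lemma nonCoprimeCount_le_three_mul {n : ℕ} (hn : 24 ≤ n) :
    nonCoprimeCount n ≤ 3 * 2 ^ (n / 2) := by
  have hthird : n * 2 ^ (n / 3) ≤ 2 * 2 ^ (n / 2) :=
    calc n * 2 ^ (n / 3) ≤ 2 ^ (n / 6 + 1) * 2 ^ (n / 3) :=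
          Nat.mul_le_mul_right _ (le_two_pow_div_six_add_one hn)
      _ = 2 * 2 ^ (n / 6 + n / 3) := by ring
      _ ≤ 2 * 2 ^ (n / 2) := Nat.mul_le_mul_left _ (Nat.pow_le_pow_right two_pos (by omega))
  linarith [nonCoprimeCount_le n]

lemma two_pow_mul_nonCoprimeCount_add_mul_lt {m : ℕ} (hm : 24 ≤ m) :
    2 ^ (m + 8) * nonCoprimeCount (m + 7) + nonCoprimeCount m * nonCoprimeCount (m + 14) <
      2 ^ (m + 14) * nonCoprimeCount m := by
  set P := 2 ^ (m / 2)
  have hP : 0 < P := Nat.two_pow_pos _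
  have hPM : P ≤ 2 ^ m := Nat.pow_le_pow_right two_pos (Nat.div_le_self m 2)
  have hy : P ≤ nonCoprimeCount m := two_pow_half_le_nonCoprimeCount m
  have hx : nonCoprimeCount (m + 7) ≤ 48 * P :=
    calc nonCoprimeCount (m + 7) ≤ 3 * 2 ^ (m / 2 + 4) :=
          (nonCoprimeCount_le_three_mul (by omega)).trans
            (Nat.mul_le_mul_left _ (Nat.pow_le_pow_right two_pos (by omega)))
      _ = 48 * P := by ring
  have hz : nonCoprimeCount (m + 14) ≤ 384 * P :=
    calc nonCoprimeCount (m + 14) ≤ 3 * 2 ^ (m / 2 + 7) :=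
          (nonCoprimeCount_le_three_mul (by omega)).trans
            (Nat.mul_le_mul_left _ (Nat.pow_le_pow_right two_pos (by omega)))
      _ = 384 * P := by ring
  have hM : 0 < 2 ^ m * nonCoprimeCount m := Nat.mul_pos (Nat.two_pow_pos m) (hP.trans_le hy)
  rw [pow_add, pow_add]
  linarith [Nat.mul_le_mul_left (2 ^ m) hx, Nat.mul_le_mul_left (2 ^ m) hy,
    Nat.mul_le_mul_left (nonCoprimeCount m) hz, Nat.mul_le_mul_left (nonCoprimeCount m) hPM]

theorem stmt_9 (n : ℕ) (hn : 36 ≤ n) :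
    (f n : ℤ) ^ 2 - f (n - 7) * f (n + 7) > 0 := by
  obtain ⟨m, rfl⟩ : ∃ m, n = m + 7 := ⟨n - 7, by omega⟩
  have hf (k : ℕ) : (f k : ℤ) = 2 ^ k - nonCoprimeCount k := by
    rw [eq_sub_iff_add_eq]; exact_mod_cast f_add_nonCoprimeCount k
  have hdom : (2 : ℤ) ^ (m + 8) * nonCoprimeCount (m + 7) +
      nonCoprimeCount m * nonCoprimeCount (m + 14) < 2 ^ (m + 14) * nonCoprimeCount m := by
    exact_mod_cast two_pow_mul_nonCoprimeCount_add_mul_lt (by omega)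
  rw [Nat.add_sub_cancel, show m + 7 + 7 = m + 14 from rfl, hf, hf, hf]
  set x : ℤ := (nonCoprimeCount (m + 7) : ℤ)
  set y : ℤ := (nonCoprimeCount m : ℤ)
  set z : ℤ := (nonCoprimeCount (m + 14) : ℤ)
  have hexpand : (2 ^ (m + 7) - x) ^ 2 - (2 ^ m - y) * (2 ^ (m + 14) - z) =
      (2 ^ (m + 14) * y - (2 ^ (m + 8) * x + y * z)) + 2 ^ m * z + x ^ 2 := by ring
  have hz : 0 ≤ 2 ^ m * z := mul_nonneg (pow_nonneg zero_le_two m) (Int.natCast_nonneg _)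
  rw [hexpand]
  linarith [sq_nonneg x]
end
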